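/- The mapping (−)° from λJmse to λJms satisfies: for every term t of λJmse, e(t°) →*μ t, and for every co-term l, e(l°) →*μ l, where e is the embedding of λJms into λJmse. -/

import Mathlib

-- Terms, co-terms and commands of the λJmse-calculus.
mutual
inductive Tm : Type
  | var : ℕ → Tm
  | lam : ℕ → Tm → Tm
  | coe : Cmd → Tm
  deriving DecidableEq
inductive Co : Type
  | nil : Co
  | cons : Tm → Co → Co
  | sel : ℕ → Cmd → Co
  deriving DecidableEq
inductive Cmd : Type
  | cut : Tm → Co → Cmd
  deriving DecidableEq
end

-- Capture-avoiding (structural) substitution.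
mutual
def substTm (t : Tm) (x : ℕ) : Tm → Tm
  | .var y => if x = y then t else .var y
  | .lam y u => .lam y (substTm t x u)
  | .coe c => .coe (substCmd t x c)
def substCo (t : Tm) (x : ℕ) : Co → Co
  | .nil => .nil
  | .cons u l => .cons (substTm t x u) (substCo t x l)
  | .sel y c => .sel y (substCmd t x c)
def substCmd (t : Tm) (x : ℕ) : Cmd → Cmd
  | .cut u l => .cut (substTm t x u) (substCo t x l)
end

-- Free variables.
mutual
def freeTm : Tm → Finset ℕ
  | .var x => {x}
  | .lam x t => freeTm t \ {x}
  | .coe c => freeCmd c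
def freeCo : Co → Finset ℕ
  | .nil => ∅
  | .cons u l => freeTm u ∪ freeCo l
  | .sel x c => freeCmd c \ {x}
def freeCmd : Cmd → Finset ℕ
  | .cut t l => freeTm t ∪ freeCo l
end

/-- Eager append of co-terms. -/
def appendCo : Co → Co → Co
  | .nil, l' => l'
  | .cons u l, l' => .cons u (appendCo l l')
  | .sel x (.cut t l), l' => .sel x (.cut t (appendCo l l'))

/-- Evaluation contexts: co-terms of the form `[]` or `u::l`. -/
def IsE : Co → Prop
  | .nil => True
  | .cons _ _ => True
  | .sel _ _ => False

-- One-step reduction of λJmse.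
mutual
inductive StepTm : Tm → Tm → Prop
  | eps (t : Tm) : StepTm (.coe (.cut t .nil)) t
  | lam {t t' : Tm} (x : ℕ) : StepTm t t' → StepTm (.lam x t) (.lam x t')
  | coe {c c' : Cmd} : StepCmd c c' → StepTm (.coe c) (.coe c')
inductive StepCo : Co → Co → Prop
  | mu {x : ℕ} {l : Co} : x ∉ freeCo l →
      StepCo (.sel x (.cut (.var x) l)) l
  | consL {u u' : Tm} (l : Co) : StepTm u u' → StepCo (.cons u l) (.cons u' l)
  | consR {l l' : Co} (u : Tm) : StepCo l l' → StepCo (.cons u l) (.cons u l')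
  | sel {c c' : Cmd} (x : ℕ) : StepCmd c c' → StepCo (.sel x c) (.sel x c')
inductive StepCmd : Cmd → Cmd → Prop
  | beta (x : ℕ) (t u : Tm) (l : Co) :
      StepCmd (.cut (.lam x t) (.cons u l)) (.cut u (.sel x (.cut t l)))
  | pi (t : Tm) (l E : Co) : IsE E →
      StepCmd (.cut (.coe (.cut t l)) E) (.cut t (appendCo l E))
  | sigma (t : Tm) (x : ℕ) (c : Cmd) :
      StepCmd (.cut t (.sel x c)) (substCmd t x c)
  | cutL {t t' : Tm} (l : Co) : StepTm t t' → StepCmd (.cut t l) (.cut t' l)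
  | cutR {l l' : Co} (t : Tm) : StepCo l l' → StepCmd (.cut t l) (.cut t l')
end

-- The λJms-calculus.
mutual
inductive MTm : Type
  | var : ℕ → MTm
  | lam : ℕ → MTm → MTm
  | app : MTm → MCo → MTm
  deriving DecidableEq
inductive MCo : Type
  | cons : MTm → MCo → MCo
  | sel : ℕ → MTm → MCo
  deriving DecidableEq
end

def MTm.IsValue : MTm → Prop
  | .var _ => True
  | .lam _ _ => True
  | .app _ _ => False

mutual
def msubstTm (t : MTm) (x : ℕ) : MTm → MTm
  | .var y => if x = y then t else .var y
  | .lam y u => .lam y (msubstTm t x u)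
  | .app u l => .app (msubstTm t x u) (msubstCo t x l)
def msubstCo (t : MTm) (x : ℕ) : MCo → MCo
  | .cons u l => .cons (msubstTm t x u) (msubstCo t x l)
  | .sel y v => .sel y (msubstTm t x v)
end

mutual
def mfreeTm : MTm → Finset ℕ
  | .var x => {x}
  | .lam x t => mfreeTm t \ {x}
  | .app t l => mfreeTm t ∪ mfreeCo l
def mfreeCo : MCo → Finset ℕ
  | .cons u l => mfreeTm u ∪ mfreeCo l
  | .sel x v => mfreeTm v \ {x}
end

-- Eager append of λJms co-terms.
def mappend : MCo → MCo → MCo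
  | .cons u l, l' => .cons u (mappend l l')
  | .sel x (.var y), l' => .sel x (.app (.var y) l')
  | .sel x (.lam y t), l' => .sel x (.app (.lam y t) l')
  | .sel x (.app t l), l' => .sel x (.app t (mappend l l'))

-- One-step reduction of λJms.
mutual
inductive MStepTm : MTm → MTm → Prop
  | beta (x : ℕ) (t u : MTm) (l : MCo) :
      MStepTm (.app (.lam x t) (.cons u l)) (.app u (.sel x (.app t l)))
  | pi (t : MTm) (l : MCo) (u : MTm) (l' : MCo) :
      MStepTm (.app (.app t l) (.cons u l')) (.app t (mappend l (.cons u l')))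
  | sigma (t : MTm) (x : ℕ) (v : MTm) :
      MStepTm (.app t (.sel x v)) (msubstTm t x v)
  | lam {t t' : MTm} (x : ℕ) : MStepTm t t' → MStepTm (.lam x t) (.lam x t')
  | appL {t t' : MTm} (l : MCo) : MStepTm t t' → MStepTm (.app t l) (.app t' l)
  | appR {l l' : MCo} (t : MTm) : MStepCo l l' → MStepTm (.app t l) (.app t l')
inductive MStepCo : MCo → MCo → Prop
  | mu {x : ℕ} {l : MCo} : x ∉ mfreeCo l → MStepCo (.sel x (.app (.var x) l)) l
  | consL {u u' : MTm} (l : MCo) : MStepTm u u' → MStepCo (.cons u l) (.cons u' l)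
  | consR {l l' : MCo} (u : MTm) : MStepCo l l' → MStepCo (.cons u l) (.cons u l')
  | sel {v v' : MTm} (x : ℕ) : MStepTm v v' → MStepCo (.sel x v) (.sel x v')
end

-- The embedding e : λJms → λJmse.
mutual
def eTm : MTm → Tm
  | .var x => .var x
  | .lam x t => .lam x (eTm t)
  | .app t l => .coe (.cut (eTm t) (eCo l))
def eCo : MCo → Co
  | .cons u l => .cons (eTm u) (eCo l)
  | .sel x (.var y) => .sel x (.cut (.var y) .nil)
  | .sel x (.lam y t) => .sel x (.cut (.lam y (eTm t)) .nil)
  | .sel x (.app t l) => .sel x (.cut (eTm t) (eCo l))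
end

-- The mapping (−)° : λJmse → λJms.
mutual
def circTm : Tm → MTm
  | .var x => .var x
  | .lam x t => .lam x (circTm t)
  | .coe c => circCmd c
def circCmd : Cmd → MTm
  | .cut t l => .app (circTm t) (circCo l)
def circCo : Co → MCo
  | .nil => .sel 0 (.var 0)
  | .cons u l => .cons (circTm u) (circCo l)
  | .sel x c => .sel x (circCmd c)
end

-- μ-reduction only in λJmse, closed under all contexts.
mutual
inductive MuStepTm : Tm → Tm → Prop
  | lam {t t' : Tm} (x : ℕ) : MuStepTm t t' → MuStepTm (.lam x t) (.lam x t')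
  | coe {c c' : Cmd} : MuStepCmd c c' → MuStepTm (.coe c) (.coe c')
inductive MuStepCo : Co → Co → Prop
  | mu {x : ℕ} {l : Co} : x ∉ freeCo l → MuStepCo (.sel x (.cut (.var x) l)) l
  | consL {u u' : Tm} (l : Co) : MuStepTm u u' → MuStepCo (.cons u l) (.cons u' l)
  | consR {l l' : Co} (u : Tm) : MuStepCo l l' → MuStepCo (.cons u l) (.cons u l')
  | sel {c c' : Cmd} (x : ℕ) : MuStepCmd c c' → MuStepCo (.sel x c) (.sel x c')
inductive MuStepCmd : Cmd → Cmd → Prop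
  | cutL {t t' : Tm} (l : Co) : MuStepTm t t' → MuStepCmd (.cut t l) (.cut t' l)
  | cutR {l l' : Co} (t : Tm) : MuStepCo l l' → MuStepCmd (.cut t l) (.cut t l')
end

/-!
`(−)°` and `e` are inverse to each other on every constructor except the empty
co-term, where `[]° = (0)0` embeds as `(0)0[]`; this is a μ-redex contracting back to `[]`.
Since μ-reduction is closed under all contexts, `e(t°) →*μ t` follows by structural induction.
-/

open Relation

section Congruence

variable {t t' : Tm} {l l' : Co} {c c' : Cmd}

theorem MuStepTm.reflTransGen_lam (x : ℕ) (h : ReflTransGen MuStepTm t t') :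
    ReflTransGen MuStepTm (.lam x t) (.lam x t') :=
  ReflTransGen.lift (Tm.lam x) (fun _ _ => MuStepTm.lam x) _ _ h

theorem MuStepTm.reflTransGen_coe (h : ReflTransGen MuStepCmd c c') :
    ReflTransGen MuStepTm (.coe c) (.coe c') :=
  ReflTransGen.lift Tm.coe (fun _ _ => MuStepTm.coe) _ _ h

theorem MuStepCmd.reflTransGen_cut (ht : ReflTransGen MuStepTm t t')
    (hl : ReflTransGen MuStepCo l l') :
    ReflTransGen MuStepCmd (.cut t l) (.cut t' l') :=
  (ReflTransGen.lift (Cmd.cut · l) (fun _ _ => MuStepCmd.cutL l) _ _ ht).trans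
    (ReflTransGen.lift (Cmd.cut t') (fun _ _ => MuStepCmd.cutR t') _ _ hl)

theorem MuStepCo.reflTransGen_cons (ht : ReflTransGen MuStepTm t t')
    (hl : ReflTransGen MuStepCo l l') :
    ReflTransGen MuStepCo (.cons t l) (.cons t' l') :=
  (ReflTransGen.lift (Co.cons · l) (fun _ _ => MuStepCo.consL l) _ _ ht).trans
    (ReflTransGen.lift (Co.cons t') (fun _ _ => MuStepCo.consR t') _ _ hl)

theorem MuStepCo.reflTransGen_sel (x : ℕ) (h : ReflTransGen MuStepCmd c c') :
    ReflTransGen MuStepCo (.sel x c) (.sel x c') :=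
  ReflTransGen.lift (Co.sel x) (fun _ _ => MuStepCo.sel x) _ _ h

end Congruence

theorem MuStepCo.eCo_circCo_nil : MuStepCo (eCo (circCo .nil)) .nil :=
  MuStepCo.mu (Finset.notMem_empty 0)

mutual

theorem eTm_circTm_reduces : ∀ t : Tm, ReflTransGen MuStepTm (eTm (circTm t)) t
  | .var _ => .refl
  | .lam x t => MuStepTm.reflTransGen_lam x (eTm_circTm_reduces t)
  | .coe (.cut t l) => MuStepTm.reflTransGen_coe <|
      MuStepCmd.reflTransGen_cut (eTm_circTm_reduces t) (eCo_circCo_reduces l)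

theorem eCo_circCo_reduces : ∀ l : Co, ReflTransGen MuStepCo (eCo (circCo l)) l
  | .nil => .single MuStepCo.eCo_circCo_nil
  | .cons u l => MuStepCo.reflTransGen_cons (eTm_circTm_reduces u) (eCo_circCo_reduces l)
  | .sel x (.cut t l) => MuStepCo.reflTransGen_sel x <|
      MuStepCmd.reflTransGen_cut (eTm_circTm_reduces t) (eCo_circCo_reduces l)

end

theorem e_circ_mu_reduces :
    (∀ t : Tm, Relation.ReflTransGen MuStepTm (eTm (circTm t)) t) ∧
    (∀ l : Co, Relation.ReflTransGen MuStepCo (eCo (circCo l)) l) :=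
  ⟨eTm_circTm_reduces, eCo_circCo_reduces⟩
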